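/- arXiv:2205.06150 — 2 statements merged into one kernel-verified Lean document; each statement's English description precedes it below -/
import Mathlib

section
/- Progress of casting: if the closed value v synthesizes type A and also checks against type B, then there exists v' such that v casts under B to v'. -/
/-! Syntax of F_i+ types -/
inductive Ty : Type
  | tvar : ℕ → Ty
  | tint : Ty
  | ttop : Ty
  | tbot : Ty
  | and : Ty → Ty → Ty
  | arrow : Ty → Ty → Ty
  | all : ℕ → Ty → Ty → Ty   -- ∀(X * A). B
  | rcd : ℕ → Ty → Ty
  deriving DecidableEq

/-- Type contexts: lists of (type variable, disjointness bound), most recent first. -/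
abbrev TCtx := List (ℕ × Ty)
/-- Term contexts. -/
abbrev Ctx := List (ℕ × Ty)

/-- Type well-formedness Δ ⊢ A. -/
inductive WfTy : TCtx → Ty → Prop
  | tvar {Δ X A} : (X, A) ∈ Δ → WfTy Δ (.tvar X)
  | tint {Δ} : WfTy Δ .tint
  | ttop {Δ} : WfTy Δ .ttop
  | tbot {Δ} : WfTy Δ .tbot
  | and {Δ A B} : WfTy Δ A → WfTy Δ B → WfTy Δ (.and A B)
  | arrow {Δ A B} : WfTy Δ A → WfTy Δ B → WfTy Δ (.arrow A B)
  | all {Δ X A B} : WfTy Δ A → WfTy ((X, A) :: Δ) B → WfTy Δ (.all X A B)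
  | rcd {Δ l A} : WfTy Δ A → WfTy Δ (.rcd l A)

/-- Type context well-formedness ⊢ Δ. -/
inductive TCW : TCtx → Prop
  | nil : TCW []
  | cons {Δ X A} : TCW Δ → WfTy Δ A → X ∉ Δ.map Prod.fst → TCW ((X, A) :: Δ)

/-- Term context well-formedness Δ ⊢ Γ. -/
def CW (Δ : TCtx) (Γ : Ctx) : Prop := ∀ p ∈ Γ, WfTy Δ p.2

/-- Type splitting  B ◁ A ▷ C, written `Spl A B C`. -/
inductive Spl : Ty → Ty → Ty → Prop
  | and {A B} : Spl (.and A B) A B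
  | arrow {A B B1 B2} : Spl B B1 B2 → Spl (.arrow A B) (.arrow A B1) (.arrow A B2)
  | rcd {l A A1 A2} : Spl A A1 A2 → Spl (.rcd l A) (.rcd l A1) (.rcd l A2)
  | all {X A B B1 B2} : Spl B B1 B2 → Spl (.all X A B) (.all X A B1) (.all X A B2)

/-- Ordinary types: no positive occurrence of intersection. -/
inductive Ordinary : Ty → Prop
  | tvar {X} : Ordinary (.tvar X)
  | tint : Ordinary .tint
  | ttop : Ordinary .ttop
  | tbot : Ordinary .tbot
  | arrow {A B} : Ordinary B → Ordinary (.arrow A B)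
  | all {X A B} : Ordinary B → Ordinary (.all X A B)
  | rcd {l A} : Ordinary A → Ordinary (.rcd l A)

/-- Bottom-like types ⌋A⌊. -/
inductive BL : Ty → Prop
  | bot : BL .tbot
  | andl {A B} : BL A → BL (.and A B)
  | andr {A B} : BL B → BL (.and A B)

/-- Algorithmic top-like types Δ ⊢ ⌉A⌈. -/
inductive TL : TCtx → Ty → Prop
  | top {Δ} : TL Δ .ttop
  | and {Δ A B} : TL Δ A → TL Δ B → TL Δ (.and A B)
  | arrow {Δ A B} : TL Δ B → TL Δ (.arrow A B)
  | rcd {Δ l A} : TL Δ A → TL Δ (.rcd l A)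
  | all {Δ X A B} : TL ((X, A) :: Δ) B → TL Δ (.all X A B)
  | tvar {Δ X A} : (X, A) ∈ Δ → BL A → TL Δ (.tvar X)

/-- Declarative BCD-style subtyping Δ ⊢ A <: B of F_i+. -/
inductive DSub : TCtx → Ty → Ty → Prop
  | refl {Δ A} : DSub Δ A A
  | trans {Δ A B C} : DSub Δ A B → DSub Δ B C → DSub Δ A C
  | top {Δ A} : DSub Δ A .ttop
  | bot {Δ A} : DSub Δ .tbot A
  | and {Δ A B C} : DSub Δ A B → DSub Δ A C → DSub Δ A (.and B C)
  | andl {Δ A B} : DSub Δ (.and A B) A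
  | andr {Δ A B} : DSub Δ (.and A B) B
  | arrow {Δ A1 A2 B1 B2} : DSub Δ B1 A1 → DSub Δ A2 B2 →
      DSub Δ (.arrow A1 A2) (.arrow B1 B2)
  | distArrow {Δ A B C} : DSub Δ (.and (.arrow A B) (.arrow A C)) (.arrow A (.and B C))
  | topArrow {Δ} : DSub Δ .ttop (.arrow .ttop .ttop)
  | rcd {Δ l A B} : DSub Δ A B → DSub Δ (.rcd l A) (.rcd l B)
  | distRcd {Δ l A B} : DSub Δ (.and (.rcd l A) (.rcd l B)) (.rcd l (.and A B))
  | topRcd {Δ l} : DSub Δ .ttop (.rcd l .ttop)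
  | all {Δ X A1 A2 B1 B2} : DSub Δ B1 A1 → DSub ((X, B1) :: Δ) A2 B2 →
      DSub Δ (.all X A1 A2) (.all X B1 B2)
  | topAll {Δ X A} : DSub Δ .ttop (.all X A .ttop)
  | distAll {Δ X A B C} : DSub Δ (.and (.all X A B) (.all X A C)) (.all X A (.and B C))
  | topVar {Δ X A} : (X, A) ∈ Δ → DSub Δ A .tbot → DSub Δ .ttop (.tvar X)

/-- Algorithmic subtyping Δ ⊢ A ≤ B with splittable types. -/
inductive ASub : TCtx → Ty → Ty → Prop
  | and {Δ A B B1 B2} : Spl B B1 B2 → ASub Δ A B1 → ASub Δ A B2 → ASub Δ A B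
  | int {Δ} : ASub Δ .tint .tint
  | var {Δ X} : ASub Δ (.tvar X) (.tvar X)
  | bot {Δ B} : Ordinary B → ASub Δ .tbot B
  | top {Δ A B} : Ordinary B → TL Δ B → ASub Δ A B
  | andl {Δ A1 A2 B} : Ordinary B → ASub Δ A1 B → ASub Δ (.and A1 A2) B
  | andr {Δ A1 A2 B} : Ordinary B → ASub Δ A2 B → ASub Δ (.and A1 A2) B
  | arrow {Δ A1 A2 B1 B2} : Ordinary (.arrow B1 B2) → ASub Δ B1 A1 → ASub Δ A2 B2 →
      ASub Δ (.arrow A1 A2) (.arrow B1 B2)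
  | rcd {Δ l A B} : Ordinary (.rcd l B) → ASub Δ A B → ASub Δ (.rcd l A) (.rcd l B)
  | all {Δ X A1 A2 B1 B2} : Ordinary (.all X B1 B2) → ASub Δ B1 A1 →
      ASub ((X, B1) :: Δ) A2 B2 → ASub Δ (.all X A1 A2) (.all X B1 B2)

/-- Disjointness axioms for structurally different type constructors. -/
inductive DAx : Ty → Ty → Prop
  | intArrow {A B} : DAx .tint (.arrow A B)
  | intRcd {l A} : DAx .tint (.rcd l A)
  | intAll {X A B} : DAx .tint (.all X A B)
  | arrowRcd {A B l C} : DAx (.arrow A B) (.rcd l C)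
  | arrowAll {A B X C D} : DAx (.arrow A B) (.all X C D)
  | rcdAll {l A X B C} : DAx (.rcd l A) (.all X B C)
  | rcdNeq {l1 l2 A B} : l1 ≠ l2 → DAx (.rcd l1 A) (.rcd l2 B)
  | symm {A B} : DAx A B → DAx B A

/-- Algorithmic disjointness Δ ⊢ A * B. -/
inductive Disj : TCtx → Ty → Ty → Prop
  | topl {Δ A B} : TL Δ A → Disj Δ A B
  | topr {Δ A B} : TL Δ B → Disj Δ A B
  | varl {Δ X A B} : (X, A) ∈ Δ → ASub Δ A B → Disj Δ (.tvar X) B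
  | varr {Δ X A B} : (X, A) ∈ Δ → ASub Δ A B → Disj Δ B (.tvar X)
  | spll {Δ A A1 A2 B} : Spl A A1 A2 → Disj Δ A1 B → Disj Δ A2 B → Disj Δ A B
  | splr {Δ A B B1 B2} : Spl B B1 B2 → Disj Δ A B1 → Disj Δ A B2 → Disj Δ A B
  | arrow {Δ A1 A2 B1 B2} : Disj Δ A2 B2 → Disj Δ (.arrow A1 A2) (.arrow B1 B2)
  | rcd {Δ l A B} : Disj Δ A B → Disj Δ (.rcd l A) (.rcd l B)
  | all {Δ X A1 A2 B1 B2} : Disj ((X, .and A1 B1) :: Δ) A2 B2 →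
      Disj Δ (.all X A1 A2) (.all X B1 B2)
  | ax {Δ A B} : DAx A B → Disj Δ A B

/-- Substitution of type C for type variable X in a type. -/
def substTT (X : ℕ) (C : Ty) : Ty → Ty
  | .tvar Y => if Y = X then C else .tvar Y
  | .tint => .tint
  | .ttop => .ttop
  | .tbot => .tbot
  | .and A B => .and (substTT X C A) (substTT X C B)
  | .arrow A B => .arrow (substTT X C A) (substTT X C B)
  | .all Y A B => .all Y (substTT X C A) (if Y = X then B else substTT X C B)
  | .rcd l A => .rcd l (substTT X C A)

/-- Pointwise substitution in a type context. -/
def substCtx (X : ℕ) (C : Ty) (Δ : TCtx) : TCtx :=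
  Δ.map fun p => (p.1, substTT X C p.2)

/-! Expressions -/
inductive Exp : Type
  | evar : ℕ → Exp
  | lit : ℤ → Exp
  | etop : Exp
  | anno : Exp → Ty → Exp
  | merge : Exp → Exp → Exp
  | efix : ℕ → Ty → Exp → Exp
  | app : Exp → Exp → Exp
  | tapp : Exp → Ty → Exp
  | proj : Exp → ℕ → Exp
  | lam : ℕ → Ty → Exp → Exp
  | tabs : ℕ → Exp → Exp
  | rcd : ℕ → Exp → Exp
  deriving DecidableEq

/-- Checkable terms p: lambdas, type abstractions, records. -/
inductive Chk : Exp → Prop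
  | lam {x A e} : Chk (.lam x A e)
  | tabs {X e} : Chk (.tabs X e)
  | rcd {l e} : Chk (.rcd l e)

/-- Values. -/
inductive Value : Exp → Prop
  | chk {p} : Chk p → Value p
  | anno {p A} : Chk p → Value (.anno p A)
  | lit {i} : Value (.lit i)
  | top : Value .etop
  | merge {v1 v2} : Value v1 → Value v2 → Value (.merge v1 v2)

/-- Pre-values u. -/
inductive PVal : Exp → Prop
  | lit {i} : PVal (.lit i)
  | top : PVal .etop
  | anno {e A} : PVal (.anno e A)
  | merge {u1 u2} : PVal u1 → PVal u2 → PVal (.merge u1 u2)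

/-- Principal types of pre-values. -/
inductive PTyp : Exp → Ty → Prop
  | lit {i} : PTyp (.lit i) .tint
  | top : PTyp .etop .ttop
  | anno {e A} : PTyp (.anno e A) A
  | merge {u1 u2 A B} : PTyp u1 A → PTyp u2 B → PTyp (.merge u1 u2) (.and A B)

/-- Top-like value generator ⟦A⟧. -/
def TLVal : Ty → Exp
  | .ttop => .etop
  | .arrow A B => .anno (.lam 0 .ttop .etop) (.arrow A B)
  | .rcd l A => .anno (.rcd l .etop) (.rcd l A)
  | .all X A B => .anno (.tabs X .etop) (.all X A B)
  | _ => .etop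

/-- Consistency of pre-values u₁ ≈ u₂. -/
inductive Cons : Exp → Exp → Prop
  | lit {i} : Cons (.lit i) (.lit i)
  | top : Cons .etop .etop
  | anno {e A B} : Cons (.anno e A) (.anno e B)
  | disjoint {u1 u2 A B} : PTyp u1 A → PTyp u2 B → Disj [] A B → Cons u1 u2
  | mergel {u1 u2 u} : Cons u1 u → Cons u2 u → Cons (.merge u1 u2) u
  | merger {u u1 u2} : Cons u u1 → Cons u u2 → Cons u (.merge u1 u2)

/-- Applicative distribution A ▷ B. -/
inductive AppDist : Ty → Ty → Prop
  | refl {A} : AppDist A A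
  | arrow {A B A1 B1 A2 B2} : AppDist A (.arrow A1 B1) → AppDist B (.arrow A2 B2) →
      AppDist (.and A B) (.arrow (.and A1 A2) (.and B1 B2))
  | all {A B X A1 B1 A2 B2} : AppDist A (.all X A1 B1) → AppDist B (.all X A2 B2) →
      AppDist (.and A B) (.all X (.and A1 A2) (.and B1 B2))
  | rcd {A B l B1 B2} : AppDist A (.rcd l B1) → AppDist B (.rcd l B2) →
      AppDist (.and A B) (.rcd l (.and B1 B2))

/-- Typing modes. -/
inductive Mode | inf | chk

/-- Bidirectional typing Δ; Γ ⊢ e ⇔ A. -/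
inductive Typing : TCtx → Ctx → Exp → Mode → Ty → Prop
  | top {Δ Γ} : TCW Δ → CW Δ Γ → Typing Δ Γ .etop .inf .ttop
  | lit {Δ Γ i} : TCW Δ → CW Δ Γ → Typing Δ Γ (.lit i) .inf .tint
  | var {Δ Γ x A} : TCW Δ → CW Δ Γ → (x, A) ∈ Γ → Typing Δ Γ (.evar x) .inf A
  | abs {Δ Γ x A e B1 B2} : WfTy Δ A → DSub Δ B1 A →
      Typing Δ ((x, A) :: Γ) e .chk B2 → Typing Δ Γ (.lam x A e) .chk (.arrow B1 B2)
  | tabs {Δ Γ X A e B} : WfTy Δ A → Typing ((X, A) :: Δ) Γ e .chk B →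
      Typing Δ Γ (.tabs X e) .chk (.all X A B)
  | rcd {Δ Γ l e A} : Typing Δ Γ e .chk A → Typing Δ Γ (.rcd l e) .chk (.rcd l A)
  | app {Δ Γ e1 e2 A B C} : Typing Δ Γ e1 .inf A → AppDist A (.arrow B C) →
      Typing Δ Γ e2 .chk B → Typing Δ Γ (.app e1 e2) .inf C
  | tapp {Δ Γ e A X B C A'} : Typing Δ Γ e .inf A → AppDist A (.all X B C) →
      WfTy Δ A' → Disj Δ A' B → Typing Δ Γ (.tapp e A') .inf (substTT X A' C)
  | proj {Δ Γ e A l B} : Typing Δ Γ e .inf A → AppDist A (.rcd l B) →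
      Typing Δ Γ (.proj e l) .inf B
  | merge {Δ Γ e1 e2 A B} : Typing Δ Γ e1 .inf A → Typing Δ Γ e2 .inf B →
      Disj Δ A B → Typing Δ Γ (.merge e1 e2) .inf (.and A B)
  | mergev {Δ Γ u1 u2 A B} : PVal u1 → PVal u2 → Cons u1 u2 →
      Typing Δ Γ u1 .inf A → Typing Δ Γ u2 .inf B →
      Typing Δ Γ (.merge u1 u2) .inf (.and A B)
  | inter {Δ Γ e A B} : Typing Δ Γ e .chk A → Typing Δ Γ e .chk B →
      Typing Δ Γ e .chk (.and A B)
  | fix {Δ Γ x A e} : WfTy Δ A → Typing Δ ((x, A) :: Γ) e .chk A →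
      Typing Δ Γ (.efix x A e) .inf A
  | anno {Δ Γ e A} : WfTy Δ A → Typing Δ Γ e .chk A → Typing Δ Γ (.anno e A) .inf A
  | sub {Δ Γ e A B} : Typing Δ Γ e .inf A → DSub Δ A B → Typing Δ Γ e .chk B

/-- Substitution of type C for type variable X in an expression. -/
def substTE (X : ℕ) (C : Ty) : Exp → Exp
  | .evar x => .evar x
  | .lit i => .lit i
  | .etop => .etop
  | .anno e A => .anno (substTE X C e) (substTT X C A)
  | .merge e1 e2 => .merge (substTE X C e1) (substTE X C e2)
  | .efix x A e => .efix x (substTT X C A) (substTE X C e)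
  | .app e1 e2 => .app (substTE X C e1) (substTE X C e2)
  | .tapp e A => .tapp (substTE X C e) (substTT X C A)
  | .proj e l => .proj (substTE X C e) l
  | .lam x A e => .lam x (substTT X C A) (substTE X C e)
  | .tabs Y e => .tabs Y (if Y = X then e else substTE X C e)
  | .rcd l e => .rcd l (substTE X C e)

/-- Substitution of expression e' for term variable x in an expression. -/
def substEE (x : ℕ) (e' : Exp) : Exp → Exp
  | .evar y => if y = x then e' else .evar y
  | .lit i => .lit i
  | .etop => .etop
  | .anno e A => .anno (substEE x e' e) A
  | .merge e1 e2 => .merge (substEE x e' e1) (substEE x e' e2)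
  | .efix y A e => .efix y A (if y = x then e else substEE x e' e)
  | .app e1 e2 => .app (substEE x e' e1) (substEE x e' e2)
  | .tapp e A => .tapp (substEE x e' e) A
  | .proj e l => .proj (substEE x e' e) l
  | .lam y A e => .lam y A (if y = x then e else substEE x e' e)
  | .tabs Y e => .tabs Y (substEE x e' e)
  | .rcd l e => .rcd l (substEE x e' e)

/-- Casting v ↪_A v'. -/
inductive Cast : Exp → Ty → Exp → Prop
  | int {i} : Cast (.lit i) .tint (.lit i)
  | top {v A} : Ordinary A → TL [] A → Cast v A (TLVal A)
  | anno {p B A} : Chk p → Ordinary A → ¬ TL [] A → DSub [] B A →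
      Cast (.anno p B) A (.anno p A)
  | mergel {v1 v2 A v} : Ordinary A → Cast v1 A v → Cast (.merge v1 v2) A v
  | merger {v1 v2 A v} : Ordinary A → Cast v2 A v → Cast (.merge v1 v2) A v
  | and {v A A1 A2 v1 v2} : Spl A A1 A2 → Cast v A1 v1 → Cast v A2 v2 →
      Cast v A (.merge v1 v2)

/-- Expression wrapping e ↝_A u. -/
inductive Wrap : Exp → Ty → Exp → Prop
  | and {e A A1 A2 u1 u2} : Spl A A1 A2 → Wrap e A1 u1 → Wrap e A2 u2 →
      Wrap e A (.merge u1 u2)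
  | anno {e A} : Ordinary A → ¬ TL [] A → Wrap e A (.anno e A)
  | top {e A} : Ordinary A → TL [] A → Wrap e A (TLVal A)

/-- Arguments: expressions, types, or record labels. -/
inductive Arg : Type
  | exp : Exp → Arg
  | ty : Ty → Arg
  | lbl : ℕ → Arg

/-- Parallel application v • arg ↪ u. -/
inductive PApp : Exp → Arg → Exp → Prop
  | abs {x A e B C e' u} : Wrap e' A u →
      PApp (.anno (.lam x A e) (.arrow B C)) (.exp e') (.anno (substEE x u e) C)
  | tabs {X e A B C} :
      PApp (.anno (.tabs X e) (.all X A B)) (.ty C)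
        (.anno (substTE X C e) (substTT X C B))
  | proj {l e A} : PApp (.anno (.rcd l e) (.rcd l A)) (.lbl l) (.anno e A)
  | merge {v1 v2 arg u1 u2} : PApp v1 arg u1 → PApp v2 arg u2 →
      PApp (.merge v1 v2) arg (.merge u1 u2)

/-- Small-step call-by-name reduction e ↪ e'. -/
inductive Step : Exp → Exp → Prop
  | papp {v e u} : Value v → PApp v (.exp e) u → Step (.app v e) u
  | ptapp {v A u} : Value v → PApp v (.ty A) u → Step (.tapp v A) u
  | pproj {v l u} : Value v → PApp v (.lbl l) u → Step (.proj v l) u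
  | fix {x A e} : Step (.efix x A e) (.anno (substEE x (.efix x A e) e) A)
  | annov {v A v'} : Value v → PVal v → Cast v A v' → Step (.anno v A) v'
  | appl {e1 e1' e2} : Step e1 e1' → Step (.app e1 e2) (.app e1' e2)
  | tappl {e e' A} : Step e e' → Step (.tapp e A) (.tapp e' A)
  | projl {e e' l} : Step e e' → Step (.proj e l) (.proj e' l)
  | anno {e e' A} : Step e e' → Step (.anno e A) (.anno e' A)
  | merge {e1 e1' e2 e2'} : Step e1 e1' → Step e2 e2' →
      Step (.merge e1 e2) (.merge e1' e2')
  | mergel {e1 e1' v2} : Step e1 e1' → Value v2 → Step (.merge e1 v2) (.merge e1' v2)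
  | merger {v1 e2 e2'} : Value v1 → Step e2 e2' → Step (.merge v1 e2) (.merge v1 e2')

/-- Isomorphic subtyping A ≲ B. -/
inductive IsoSub : Ty → Ty → Prop
  | refl {A} : IsoSub A A
  | and {A1 A2 B B1 B2} : Spl B B1 B2 → IsoSub A1 B1 → IsoSub A2 B2 →
      IsoSub (.and A1 A2) B


/-!
A value checked against `B` either splits `B = B₁ & B₂` through the intersection rule, or
synthesizes some `A` with `A <: B`. Casting follows the splitting of `B`; at an ordinary `B`
it needs the inversions `Int <: B ⇒ B = Int`, `⊤ <: B ⇒ B` top-like, and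
`A₁ & A₂ <: B ⇒ A₁ <: B ∨ A₂ <: B` (up to top-like `B`), which hold syntactically for the
algorithmic subtyping relation. That relation is complete for declarative subtyping once it is
shown transitive, by induction on the total size of the three types.
-/
namespace Ty

def size : Ty → ℕ
  | .and A B | .arrow A B | .all _ A B => A.size + B.size + 1
  | .rcd _ A => A.size + 1
  | _ => 1

theorem size_pos (A : Ty) : 0 < A.size := by
  cases A <;> simp [size]

theorem ordinary_or_spl : ∀ A : Ty, Ordinary A ∨ ∃ A1 A2, Spl A A1 A2
  | .tvar _ => .inl .tvar
  | .tint => .inl .tint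
  | .ttop => .inl .ttop
  | .tbot => .inl .tbot
  | .and _ _ => .inr ⟨_, _, .and⟩
  | .arrow _ B => (ordinary_or_spl B).imp .arrow fun ⟨_, _, h⟩ => ⟨_, _, .arrow h⟩
  | .all _ _ B => (ordinary_or_spl B).imp .all fun ⟨_, _, h⟩ => ⟨_, _, .all h⟩
  | .rcd _ A => (ordinary_or_spl A).imp .rcd fun ⟨_, _, h⟩ => ⟨_, _, .rcd h⟩

end Ty

namespace Spl

variable {A A1 A2 : Ty}

theorem size_lt (h : Spl A A1 A2) : A1.size < A.size ∧ A2.size < A.size := by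
  induction h with
  | @and B C => have := B.size_pos; have := C.size_pos; simp only [Ty.size]; omega
  | _ => simp only [Ty.size]; omega

theorem not_ordinary (h : Spl A A1 A2) : ¬ Ordinary A := by
  induction h with
  | and => nofun
  | arrow _ ih => rintro ⟨⟩; exact ih ‹_›
  | rcd _ ih => rintro ⟨⟩; exact ih ‹_›
  | all _ ih => rintro ⟨⟩; exact ih ‹_›

theorem unique (h : Spl A A1 A2) {B1 B2 : Ty} (h' : Spl A B1 B2) : A1 = B1 ∧ A2 = B2 := by
  induction h generalizing B1 B2 with
  | and => cases h'; exact ⟨rfl, rfl⟩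
  | arrow _ ih => cases h' with | arrow h' => obtain ⟨rfl, rfl⟩ := ih h'; exact ⟨rfl, rfl⟩
  | rcd _ ih => cases h' with | rcd h' => obtain ⟨rfl, rfl⟩ := ih h'; exact ⟨rfl, rfl⟩
  | all _ ih => cases h' with | all h' => obtain ⟨rfl, rfl⟩ := ih h'; exact ⟨rfl, rfl⟩

theorem tl_iff (h : Spl A A1 A2) {Δ : TCtx} : TL Δ A ↔ TL Δ A1 ∧ TL Δ A2 := by
  induction h generalizing Δ with
  | and => exact ⟨fun | .and h1 h2 => ⟨h1, h2⟩, fun ⟨h1, h2⟩ => .and h1 h2⟩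
  | arrow _ ih => exact ⟨fun | .arrow h => (ih.1 h).imp .arrow .arrow,
      fun | ⟨.arrow h1, .arrow h2⟩ => .arrow (ih.2 ⟨h1, h2⟩)⟩
  | rcd _ ih => exact ⟨fun | .rcd h => (ih.1 h).imp .rcd .rcd,
      fun | ⟨.rcd h1, .rcd h2⟩ => .rcd (ih.2 ⟨h1, h2⟩)⟩
  | all _ ih => exact ⟨fun | .all h => (ih.1 h).imp .all .all,
      fun | ⟨.all h1, .all h2⟩ => .all (ih.2 ⟨h1, h2⟩)⟩

theorem bl_or_bl (h : Spl A A1 A2) (hA : BL A) : BL A1 ∨ BL A2 := by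
  cases h with
  | and => cases hA with
    | andl h => exact .inl h
    | andr h => exact .inr h
  | _ => nomatch hA

end Spl

theorem Ty.split_induction {motive : Ty → Prop} (ordinary : ∀ A, Ordinary A → motive A)
    (spl : ∀ A A1 A2, Spl A A1 A2 → motive A1 → motive A2 → motive A) (A : Ty) : motive A := by
  induction hn : A.size using Nat.strong_induction_on generalizing A with
  | _ n ih =>
    obtain hA | ⟨A1, A2, h⟩ := A.ordinary_or_spl
    · exact ordinary A hA
    · exact spl A A1 A2 h (ih _ (hn ▸ h.size_lt.1) A1 rfl) (ih _ (hn ▸ h.size_lt.2) A2 rfl)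

/-- Top-likeness and algorithmic subtyping consult the context only through which type
variables have bottom-like bounds, so they transfer along this preorder. -/
def TCtx.BotLikeLE (Δ Δ' : TCtx) : Prop :=
  ∀ X A, (X, A) ∈ Δ → ∃ A', (X, A') ∈ Δ' ∧ (BL A → BL A')

namespace TCtx.BotLikeLE

variable {Δ Δ' : TCtx}

theorem cons (h : Δ.BotLikeLE Δ') (X : ℕ) (A : Ty) :
    TCtx.BotLikeLE ((X, A) :: Δ) ((X, A) :: Δ') := by
  intro Y C hm
  rcases List.mem_cons.mp hm with heq | hm
  · cases heq; exact ⟨A, List.mem_cons_self, id⟩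
  · obtain ⟨C', hm', hC⟩ := h Y C hm
    exact ⟨C', List.mem_cons_of_mem _ hm', hC⟩

theorem cons_of_bl {X : ℕ} {A B : Ty} (h : BL A → BL B) :
    TCtx.BotLikeLE ((X, A) :: Δ) ((X, B) :: Δ) := by
  intro Y C hm
  rcases List.mem_cons.mp hm with heq | hm
  · cases heq; exact ⟨B, List.mem_cons_self, h⟩
  · exact ⟨C, List.mem_cons_of_mem _ hm, id⟩

end TCtx.BotLikeLE

theorem TL.mono {Δ Δ' : TCtx} {A : Ty} (h : TL Δ A) (hΔ : Δ.BotLikeLE Δ') : TL Δ' A := by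
  induction h generalizing Δ' with
  | top => exact .top
  | and _ _ ih1 ih2 => exact .and (ih1 hΔ) (ih2 hΔ)
  | arrow _ ih => exact .arrow (ih hΔ)
  | rcd _ ih => exact .rcd (ih hΔ)
  | all _ ih => exact .all (ih (hΔ.cons _ _))
  | tvar hm hbl =>
    obtain ⟨_, hm', hA⟩ := hΔ _ _ hm
    exact .tvar hm' (hA hbl)

namespace ASub

variable {Δ : TCtx}

theorem mono {Δ' : TCtx} {A B : Ty} (h : ASub Δ A B) (hΔ : Δ.BotLikeLE Δ') : ASub Δ' A B := by
  induction h generalizing Δ' with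
  | and sp _ _ ih1 ih2 => exact .and sp (ih1 hΔ) (ih2 hΔ)
  | int => exact .int
  | var => exact .var
  | bot ho => exact .bot ho
  | top ho htl => exact .top ho (htl.mono hΔ)
  | andl ho _ ih => exact .andl ho (ih hΔ)
  | andr ho _ ih => exact .andr ho (ih hΔ)
  | arrow ho _ _ ih1 ih2 => exact .arrow ho (ih1 hΔ) (ih2 hΔ)
  | rcd ho _ ih => exact .rcd ho (ih hΔ)
  | all ho _ _ ih1 ih2 => exact .all ho (ih1 hΔ) (ih2 (hΔ.cons _ _))

theorem bl {A B : Ty} (h : ASub Δ A B) (hB : BL B) : BL A := by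
  induction h with
  | and sp _ _ ih1 ih2 => exact (sp.bl_or_bl hB).elim ih1 ih2
  | bot _ => exact .bot
  | top ho htl =>
    cases hB with
    | bot => nomatch htl
    | andl _ | andr _ => nomatch ho
  | andl _ _ ih => exact .andl (ih hB)
  | andr _ _ ih => exact .andr (ih hB)
  | _ => nomatch hB

theorem tl {A B : Ty} (h : ASub Δ A B) (hA : TL Δ A) : TL Δ B := by
  induction h with
  | and sp _ _ ih1 ih2 => exact sp.tl_iff.2 ⟨ih1 hA, ih2 hA⟩
  | int | var => exact hA
  | bot _ => nomatch hA
  | top _ htl => exact htl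
  | andl _ _ ih => cases hA with | and h _ => exact ih h
  | andr _ _ ih => cases hA with | and _ h => exact ih h
  | arrow _ _ _ _ ih => cases hA with | arrow h => exact .arrow (ih h)
  | rcd _ _ ih => cases hA with | rcd h => exact .rcd (ih h)
  | all _ h1 _ _ ih =>
    cases hA with | all h => exact .all (ih (h.mono (.cons_of_bl h1.bl)))

theorem inv_spl {A B B1 B2 : Ty} (h : ASub Δ A B) (sp : Spl B B1 B2) :
    ASub Δ A B1 ∧ ASub Δ A B2 := by
  cases h with
  | and sp' h1 h2 => obtain ⟨rfl, rfl⟩ := sp'.unique sp; exact ⟨h1, h2⟩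
  | int | var => nomatch sp
  | bot ho | top ho _ | andl ho _ | andr ho _ | arrow ho _ _ | rcd ho _ | all ho _ _ =>
    exact absurd ho sp.not_ordinary

theorem inv_spl_left {B B1 B2 C : Ty} (h : ASub Δ B C) (sp : Spl B B1 B2) (hC : Ordinary C) :
    ASub Δ B1 C ∨ ASub Δ B2 C ∨ TL Δ C := by
  induction h generalizing B1 B2 with
  | and spC => exact absurd hC spC.not_ordinary
  | int | var | bot _ => nomatch sp
  | top _ htl => exact .inr (.inr htl)
  | andl _ h => cases sp; exact .inl h
  | andr _ h => cases sp; exact .inr (.inl h)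
  | arrow ho h1 _ _ ih =>
    cases sp with | arrow sp => cases ho with | arrow ho =>
    exact (ih sp ho).imp (.arrow hC h1) (Or.imp (.arrow hC h1) .arrow)
  | rcd ho _ ih =>
    cases sp with | rcd sp => cases ho with | rcd ho =>
    exact (ih sp ho).imp (.rcd hC) (Or.imp (.rcd hC) .rcd)
  | all ho h1 _ _ ih =>
    cases sp with | all sp => cases ho with | all ho =>
    exact (ih sp ho).imp (.all hC h1) (Or.imp (.all hC h1) .all)

theorem and_left {A A' B : Ty} (h : ASub Δ A B) : ASub Δ (.and A A') B := by
  induction B using Ty.split_induction with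
  | ordinary B hB => exact .andl hB h
  | spl B _ _ sp ih1 ih2 => exact .and sp (ih1 (h.inv_spl sp).1) (ih2 (h.inv_spl sp).2)

theorem and_right {A A' B : Ty} (h : ASub Δ A' B) : ASub Δ (.and A A') B := by
  induction B using Ty.split_induction with
  | ordinary B hB => exact .andr hB h
  | spl B _ _ sp ih1 ih2 => exact .and sp (ih1 (h.inv_spl sp).1) (ih2 (h.inv_spl sp).2)

theorem arrow_congr {A1 A2 B1 B2 : Ty} (h1 : ASub Δ B1 A1) (h2 : ASub Δ A2 B2) :
    ASub Δ (.arrow A1 A2) (.arrow B1 B2) := by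
  induction B2 using Ty.split_induction with
  | ordinary B2 hB => exact .arrow (.arrow hB) h1 h2
  | spl B2 _ _ sp ih1 ih2 => exact .and (.arrow sp) (ih1 (h2.inv_spl sp).1) (ih2 (h2.inv_spl sp).2)

theorem rcd_congr {l : ℕ} {A B : Ty} (h : ASub Δ A B) : ASub Δ (.rcd l A) (.rcd l B) := by
  induction B using Ty.split_induction with
  | ordinary B hB => exact .rcd (.rcd hB) h
  | spl B _ _ sp ih1 ih2 => exact .and (.rcd sp) (ih1 (h.inv_spl sp).1) (ih2 (h.inv_spl sp).2)

theorem all_congr {X : ℕ} {A1 A2 B1 B2 : Ty} (h1 : ASub Δ B1 A1)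
    (h2 : ASub ((X, B1) :: Δ) A2 B2) : ASub Δ (.all X A1 A2) (.all X B1 B2) := by
  induction B2 using Ty.split_induction with
  | ordinary B2 hB => exact .all (.all hB) h1 h2
  | spl B2 _ _ sp ih1 ih2 => exact .and (.all sp) (ih1 (h2.inv_spl sp).1) (ih2 (h2.inv_spl sp).2)

protected theorem refl : ∀ (Δ : TCtx) (A : Ty), ASub Δ A A
  | _, .tvar _ => .var
  | _, .tint => .int
  | _, .ttop => .top .ttop .top
  | _, .tbot => .bot .tbot
  | Δ, .and A B => .and .and (ASub.refl Δ A).and_left (ASub.refl Δ B).and_right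
  | Δ, .arrow A B => arrow_congr (ASub.refl Δ A) (ASub.refl Δ B)
  | Δ, .rcd _ A => rcd_congr (ASub.refl Δ A)
  | Δ, .all X A B => all_congr (ASub.refl Δ A) (ASub.refl ((X, A) :: Δ) B)

theorem of_tl {A B : Ty} (h : TL Δ B) : ASub Δ A B := by
  induction B using Ty.split_induction with
  | ordinary B hB => exact .top hB h
  | spl B _ _ sp ih1 ih2 => exact .and sp (ih1 (sp.tl_iff.1 h).1) (ih2 (sp.tl_iff.1 h).2)

theorem of_bl {A B : Ty} (h : BL A) : ASub Δ A B := by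
  induction B using Ty.split_induction with
  | ordinary B hB =>
    induction h with
    | bot => exact .bot hB
    | andl _ ih => exact .andl hB ih
    | andr _ ih => exact .andr hB ih
  | spl B _ _ sp ih1 ih2 => exact .and sp ih1 ih2

theorem trans {A B C : Ty} (hAB : ASub Δ A B) (hBC : ASub Δ B C) :
    ASub Δ A C := by
  induction hn : A.size + B.size + C.size using Nat.strong_induction_on
    generalizing Δ A B C with
  | _ n ih =>
  have IH {Δ A B C} (hlt : A.size + B.size + C.size < n) :
      ASub Δ A B → ASub Δ B C → ASub Δ A C :=
    fun h1 h2 => ih _ hlt h1 h2 rfl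
  obtain hC | ⟨C1, C2, spC⟩ := C.ordinary_or_spl
  swap
  · have := spC.size_lt
    obtain ⟨h1, h2⟩ := hBC.inv_spl spC
    exact .and spC (IH (by omega) hAB h1) (IH (by omega) hAB h2)
  obtain hB | ⟨B1, B2, spB⟩ := B.ordinary_or_spl
  swap
  · have := spB.size_lt
    obtain h | h | h := hBC.inv_spl_left spB hC
    · exact IH (by omega) (hAB.inv_spl spB).1 h
    · exact IH (by omega) (hAB.inv_spl spB).2 h
    · exact .top hC h
  cases hAB with
  | and sp => exact absurd hB sp.not_ordinary
  | int | var => exact hBC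
  | bot _ => exact .of_bl .bot
  | top _ htl => exact .of_tl (hBC.tl htl)
  | andl _ h => exact .andl hC (IH (by simp only [Ty.size] at hn; omega) h hBC)
  | andr _ h => exact .andr hC (IH (by simp only [Ty.size] at hn; omega) h hBC)
  | arrow _ hB1 hA2 =>
    cases hBC with
    | and sp => exact absurd hC sp.not_ordinary
    | top _ htl => exact .top hC htl
    | arrow _ hC1 hB2 =>
      simp only [Ty.size] at hn
      exact .arrow hC (IH (by omega) hC1 hB1) (IH (by omega) hA2 hB2)
  | rcd _ h =>
    cases hBC with
    | and sp => exact absurd hC sp.not_ordinary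
    | top _ htl => exact .top hC htl
    | rcd _ h' => exact .rcd hC (IH (by simp only [Ty.size] at hn; omega) h h')
  | all _ hB1 hA2 =>
    cases hBC with
    | and sp => exact absurd hC sp.not_ordinary
    | top _ htl => exact .top hC htl
    | all _ hC1 hB2 =>
      simp only [Ty.size] at hn
      -- narrowing the bound of `X` from `B1` to `C1 ≤ B1` keeps `hA2` valid
      have hA2' := hA2.mono (.cons_of_bl hC1.bl)
      exact .all hC (IH (by omega) hC1 hB1) (IH (by omega) hA2' hB2)

end ASub

theorem DSub.toASub {Δ : TCtx} {A B : Ty} (h : DSub Δ A B) : ASub Δ A B := by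
  induction h with
  | refl => exact .refl _ _
  | trans _ _ ih1 ih2 => exact ih1.trans ih2
  | top => exact .of_tl .top
  | bot => exact .of_bl .bot
  | and _ _ ih1 ih2 => exact .and .and ih1 ih2
  | andl => exact (ASub.refl _ _).and_left
  | andr => exact (ASub.refl _ _).and_right
  | arrow _ _ ih1 ih2 => exact .arrow_congr ih1 ih2
  | rcd _ ih => exact .rcd_congr ih
  | all _ _ ih1 ih2 => exact .all_congr ih1 ih2
  | topArrow => exact .of_tl (.arrow .top)
  | topRcd => exact .of_tl (.rcd .top)
  | topAll => exact .of_tl (.all .top)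
  | topVar hm _ ih => exact .top .tvar (.tvar hm (ih.bl .bot))
  | distArrow | distRcd | distAll =>
    exact .and (by constructor; exact .and) (ASub.refl _ _).and_left (ASub.refl _ _).and_right

theorem BL.dsub_bot {Δ : TCtx} {A : Ty} (h : BL A) : DSub Δ A .tbot := by
  induction h with
  | bot => exact .refl
  | andl _ ih => exact .trans .andl ih
  | andr _ ih => exact .trans .andr ih

theorem TL.dsub_top {Δ : TCtx} {A : Ty} (h : TL Δ A) : DSub Δ .ttop A := by
  induction h with
  | top => exact .refl
  | and _ _ ih1 ih2 => exact .and ih1 ih2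
  | arrow _ ih => exact .trans .topArrow (.arrow .top ih)
  | rcd _ ih => exact .trans .topRcd (.rcd ih)
  | all _ ih => exact .trans .topAll (.all .refl ih)
  | tvar hm hbl => exact .topVar hm hbl.dsub_bot

theorem Spl.dsub {A A1 A2 : Ty} (h : Spl A A1 A2) {Δ : TCtx} : DSub Δ (.and A1 A2) A := by
  induction h generalizing Δ with
  | and => exact .refl
  | arrow _ ih => exact .trans .distArrow (.arrow .refl ih)
  | rcd _ ih => exact .trans .distRcd (.rcd ih)
  | all _ ih => exact .trans .distAll (.all .refl ih)

theorem ASub.toDSub {Δ : TCtx} {A B : Ty} (h : ASub Δ A B) : DSub Δ A B := by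
  induction h with
  | and sp _ _ ih1 ih2 => exact .trans (.and ih1 ih2) sp.dsub
  | int | var => exact .refl
  | bot _ => exact .bot
  | top _ htl => exact .trans .top htl.dsub_top
  | andl _ _ ih => exact .trans .andl ih
  | andr _ _ ih => exact .trans .andr ih
  | arrow _ _ _ ih1 ih2 => exact .arrow ih1 ih2
  | rcd _ _ ih => exact .rcd ih
  | all _ _ _ ih1 ih2 => exact .all ih1 ih2

theorem PTyp.of_typing {Δ : TCtx} {Γ : Ctx} {v : Exp} {A : Ty} (hv : Value v)
    (h : Typing Δ Γ v .inf A) : PTyp v A := by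
  induction hv generalizing A with
  | chk hp => cases hp <;> nomatch h
  | anno | lit | top => cases h; constructor
  | merge _ _ ih1 ih2 =>
    cases h with
    | merge h1 h2 | mergev _ _ _ h1 h2 => exact .merge (ih1 h1) (ih2 h2)

theorem Cast.exists_of_asub {v : Exp} {A B : Ty} (hv : Value v) (hA : PTyp v A)
    (hAB : ASub [] A B) : ∃ v', Cast v B v' := by
  induction B using Ty.split_induction generalizing v A with
  | spl B _ _ sp ih1 ih2 =>
    obtain ⟨_, h1⟩ := ih1 hv hA (hAB.inv_spl sp).1
    obtain ⟨_, h2⟩ := ih2 hv hA (hAB.inv_spl sp).2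
    exact ⟨_, .and sp h1 h2⟩
  | ordinary B hB =>
    induction hA with
    | lit =>
      cases hAB with
      | and sp => exact absurd hB sp.not_ordinary
      | int => exact ⟨_, .int⟩
      | top _ htl => exact ⟨_, .top hB htl⟩
    | top =>
      cases hAB with
      | and sp => exact absurd hB sp.not_ordinary
      | top _ htl => exact ⟨_, .top hB htl⟩
    | anno =>
      cases hv with
      | chk hp => nomatch hp
      | anno hp =>
        by_cases htl : TL [] B
        · exact ⟨_, .top hB htl⟩
        · exact ⟨_, .anno hp hB htl hAB.toDSub⟩
    | merge _ _ ih1 ih2 =>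
      cases hv with
      | chk hp => nomatch hp
      | merge hv1 hv2 =>
        cases hAB with
        | and sp => exact absurd hB sp.not_ordinary
        | top _ htl => exact ⟨_, .top hB htl⟩
        | andl _ h => obtain ⟨_, h⟩ := ih1 hv1 h; exact ⟨_, .mergel hB h⟩
        | andr _ h => obtain ⟨_, h⟩ := ih2 hv2 h; exact ⟨_, .merger hB h⟩

theorem Cast.exists_of_dsub {v : Exp} {A B : Ty} (hv : Value v) (h : Typing [] [] v .inf A)
    (hAB : DSub [] A B) : ∃ v', Cast v B v' :=
  exists_of_asub hv (.of_typing hv h) hAB.toASub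

/-- Progress of casting. -/
theorem casting_progress (v : Exp) (A B : Ty)
    (hv : Value v) (h1 : Typing [] [] v .inf A) (h2 : Typing [] [] v .chk B) :
    ∃ v', Cast v B v' := by
  induction B with
  | and B1 B2 ih1 ih2 =>
    cases h2 with
    | inter h2 h2' =>
      obtain ⟨_, c1⟩ := ih1 h2
      obtain ⟨_, c2⟩ := ih2 h2'
      exact ⟨_, .and .and c1 c2⟩
    | sub h hAB => exact Cast.exists_of_dsub hv h hAB
  | _ =>
    cases h2 with
    | sub h hAB => exact Cast.exists_of_dsub hv h hAB
    -- the remaining rules type λ-, Λ- and record literals, which never synthesize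
    | _ => nomatch h1
end

section
/- Isomorphic subtypes are equivalent: if A ≲ B (A is an isomorphic subtype of B), then A and B are mutual subtypes under the empty context. -/
lemma spl_equiv {B B1 B2 : Ty} (h : Spl B B1 B2) (Δ : TCtx) :
    DSub Δ B (.and B1 B2) ∧ DSub Δ (.and B1 B2) B := by
  induction h generalizing Δ with
  | and => exact ⟨DSub.refl, DSub.refl⟩
  | arrow h ih =>
    obtain ⟨h1, h2⟩ := ih Δ
    exact ⟨DSub.and (DSub.arrow DSub.refl (DSub.trans h1 DSub.andl))
        (DSub.arrow DSub.refl (DSub.trans h1 DSub.andr)),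
      DSub.trans DSub.distArrow (DSub.arrow DSub.refl h2)⟩
  | rcd h ih =>
    obtain ⟨h1, h2⟩ := ih Δ
    exact ⟨DSub.and (DSub.rcd (DSub.trans h1 DSub.andl))
        (DSub.rcd (DSub.trans h1 DSub.andr)),
      DSub.trans DSub.distRcd (DSub.rcd h2)⟩
  | @all X A _ _ _ h ih =>
    obtain ⟨h1, h2⟩ := ih ((X, A) :: Δ)
    exact ⟨DSub.and (DSub.all DSub.refl (DSub.trans h1 DSub.andl))
        (DSub.all DSub.refl (DSub.trans h1 DSub.andr)),
      DSub.trans DSub.distAll (DSub.all DSub.refl h2)⟩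

/-- Isomorphic subtypes are equivalent. -/
theorem isosub_equiv (A B : Ty) (h : IsoSub A B) :
    DSub [] A B ∧ DSub [] B A := by
  induction h with
  | refl => exact ⟨DSub.refl, DSub.refl⟩
  | and hspl _ _ ih1 ih2 =>
    obtain ⟨s1, s2⟩ := spl_equiv hspl []
    exact ⟨DSub.trans (DSub.and (DSub.trans DSub.andl ih1.1)
        (DSub.trans DSub.andr ih2.1)) s2,
      DSub.trans s1 (DSub.and (DSub.trans DSub.andl ih1.2)
        (DSub.trans DSub.andr ih2.2))⟩
end
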